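/- arXiv:1608.01189 — 2 statements merged into one kernel-verified Lean document; each statement's English description precedes it below -/
import Mathlib

section
/- For every integer t ≥ 0 there exist a finite simple graph G and an edge e of G such that ppt(G_e) ≤ ppt(G) − t, where G_e is the graph obtained from G by subdividing the edge e. -/
namespace PowerProp

open SimpleGraph

variable {V : Type*} {α β : Type*}

/-- The closed neighborhood `N[S]` of a set of vertices. -/
def closedNbhd (G : SimpleGraph V) (S : Set V) : Set V :=
  S ∪ ⋃ v ∈ S, G.neighborSet v

/-- One propagation step of the `k`-power domination process. -/
def propStep (k : ℕ) (G : SimpleGraph V) (S : Set V) : Set V :=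
  S ∪ {w | ∃ v ∈ S, w ∈ G.neighborSet v \ S ∧ (G.neighborSet v \ S).ncard ≤ k}

/-- `S^[t]`: the set observed after `t` steps (step 1 is the domination step). -/
def powerIter (k : ℕ) (G : SimpleGraph V) (S : Set V) : ℕ → Set V
  | 0 => S
  | 1 => closedNbhd G S
  | (t + 2) => propStep k G (powerIter k G S (t + 1))

/-- `S` is a `k`-power dominating set of `G`. -/
def IsPDS (k : ℕ) (G : SimpleGraph V) (S : Set V) : Prop :=
  ∃ l, powerIter k G S l = Set.univ

/-- The `k`-power domination number `γ_{P,k}(G)`. -/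
noncomputable def pdNum (k : ℕ) (G : SimpleGraph V) : ℕ :=
  sInf {n | ∃ S : Set V, S.ncard = n ∧ IsPDS k G S}

/-- `S` is a minimum `k`-power dominating set of `G`. -/
def IsMinPDS (k : ℕ) (G : SimpleGraph V) (S : Set V) : Prop :=
  IsPDS k G S ∧ S.ncard = pdNum k G

/-- `ppt_k(G,S)`, the `k`-power propagation time of `G` with `S`. -/
noncomputable def pptOf (k : ℕ) (G : SimpleGraph V) (S : Set V) : ℕ :=
  sInf {l | powerIter k G S l = Set.univ}

/-- `ppt_k(G)`, the (minimum) `k`-power propagation time of `G`. -/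
noncomputable def ppt (k : ℕ) (G : SimpleGraph V) : ℕ :=
  sInf {t | ∃ S : Set V, IsMinPDS k G S ∧ pptOf k G S = t}

end PowerProp

open SimpleGraph

namespace PowerProp

variable {W : Type*}

/-- The graph obtained from `G` by subdividing the edge `uv`: the edge `uv` is
replaced by a path `u - w - v` through the new vertex `w = Sum.inr ()`. -/
def subdivide (G : SimpleGraph W) (u v : W) : SimpleGraph (W ⊕ Unit) :=
  SimpleGraph.fromRel (fun a b =>
    (∃ x y : W, a = Sum.inl x ∧ b = Sum.inl y ∧ G.Adj x y ∧
      ¬((x = u ∧ y = v) ∨ (x = v ∧ y = u))) ∨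
    (a = Sum.inl u ∧ b = Sum.inr ()) ∨ (a = Sum.inl v ∧ b = Sum.inr ()))

end PowerProp

/-!
In the graph `G` of `exampleRel` the vertex `2` carries two pendant leaves, which form a fort,
so every power dominating set contains one of `0, 1, 2`; and `{2}` alone observes `3, 4` and then
propagates down the path `5, …, 2t + 5`. So `γ_P(G) = 1`, and as observation spreads by at most
one edge per step, `ppt(G) ≥ 2t + 2`.

Subdividing `34` by a new vertex `w` gives `3` and `4` the two common neighbours `5` and `w`
outside `{0, …, 4}`, so the complement of `{0, …, 4}` becomes a fort and `γ_P(G_e) = 2`. The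
second vertex of a minimum power dominating set can then sit at the midpoint `t + 5` of the
path, and `{2, t + 5}` observes everything within `t + 2` steps.
-/

namespace PowerProp

section Propagation

variable {V : Type*} {G : SimpleGraph V} {S : Set V} {k : ℕ}

lemma mem_closedNbhd_iff {x : V} : x ∈ closedNbhd G S ↔ ∃ s ∈ S, s = x ∨ G.Adj s x := by
  simp only [closedNbhd, Set.mem_union, Set.mem_iUnion, mem_neighborSet, exists_prop]
  constructor
  · rintro (hx | ⟨s, hs, hsx⟩)
    exacts [⟨x, hx, Or.inl rfl⟩, ⟨s, hs, Or.inr hsx⟩]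
  · rintro ⟨s, hs, rfl | hsx⟩
    exacts [Or.inl hs, Or.inr ⟨s, hs, hsx⟩]

lemma apply_le_add_of_mem_powerIter (f : V → ℕ) (c : ℕ)
    (hf : ∀ a b, G.Adj a b → f b ≤ f a + 1) (hS : ∀ s ∈ S, f s ≤ c) :
    ∀ l, ∀ x ∈ powerIter k G S l, f x ≤ c + l
  | 0 => hS
  | 1 => by
      intro x hx
      obtain ⟨s, hs, rfl | hsx⟩ := mem_closedNbhd_iff.1 hx
      · exact (hS s hs).trans (Nat.le_succ c)
      · exact (hf s x hsx).trans (Nat.add_le_add_right (hS s hs) 1)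
  | l + 2 => by
      have ih := apply_le_add_of_mem_powerIter f c hf hS (l + 1)
      rintro x (hx | ⟨v, hv, ⟨hvx, -⟩, -⟩)
      · exact (ih x hx).trans (by omega)
      · exact (hf v x hvx).trans (by have := ih v hv; omega)

lemma setOf_le_subset_powerIter (f : V → ℕ)
    (hbase : ∀ x, f x ≤ 1 → x ∈ closedNbhd G S)
    (hstep : ∀ a, 2 ≤ f a → ∃ p, G.Adj p a ∧ f p < f a ∧ ∀ x, G.Adj p x → f x < f a ∨ x = a) :
    ∀ j, 1 ≤ j → {x | f x ≤ j} ⊆ powerIter 1 G S j := by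
  intro j hj
  induction j, hj using Nat.le_induction with
  | base => exact hbase
  | succ j hj ih =>
    obtain ⟨m, rfl⟩ : ∃ m, j = m + 1 := ⟨j - 1, by omega⟩
    intro a ha
    by_cases hin : a ∈ powerIter 1 G S (m + 1)
    · exact Or.inl hin
    have hfa : f a = m + 2 := by
      have ha : f a ≤ m + 2 := ha
      by_contra hne
      exact hin (ih (show f a ≤ m + 1 by omega))
    obtain ⟨p, hpa, hpf, hnbr⟩ := hstep a (by omega)
    refine Or.inr ⟨p, ih (show f p ≤ m + 1 by omega), ⟨hpa, hin⟩, ?_⟩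
    calc (G.neighborSet p \ powerIter 1 G S (m + 1)).ncard
        ≤ ({a} : Set V).ncard := by
          refine Set.ncard_le_ncard (fun x ⟨hpx, hx⟩ => ?_) (Set.finite_singleton a)
          exact (hnbr x hpx).resolve_left fun h => hx (ih (show f x ≤ m + 1 by omega))
      _ = 1 := Set.ncard_singleton a

/-- A fort, in the sense of zero forcing. -/
def IsFort (G : SimpleGraph V) (F : Set V) : Prop :=
  F.Nonempty ∧ ∀ v ∉ F, ∀ w ∈ F, G.Adj v w → ∃ w' ∈ F, w' ≠ w ∧ G.Adj v w'

lemma IsFort.disjoint_powerIter [Finite V] {F : Set V} (hF : IsFort G F)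
    (hS : Disjoint (closedNbhd G S) F) : ∀ l, Disjoint (powerIter 1 G S l) F
  | 0 => hS.mono_left Set.subset_union_left
  | 1 => hS
  | l + 2 => by
      have ih := hF.disjoint_powerIter hS (l + 1)
      refine Set.disjoint_union_left.2 ⟨ih, Set.disjoint_left.2 ?_⟩
      rintro w ⟨v, hv, ⟨hvw, hw⟩, hcard⟩ hwF
      obtain ⟨w', hw'F, hne, hvw'⟩ := hF.2 v (Set.disjoint_left.1 ih hv) w hwF hvw
      have : 1 < (G.neighborSet v \ powerIter 1 G S (l + 1)).ncard :=
        (Set.one_lt_ncard_iff (Set.toFinite _)).2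
          ⟨w', w, ⟨hvw', Set.disjoint_right.1 ih hw'F⟩, ⟨hvw, hw⟩, hne⟩
      omega

lemma IsPDS.exists_mem_fort [Finite V] {F : Set V} (hS : IsPDS 1 G S) (hF : IsFort G F) :
    ∃ s ∈ S, ∃ x ∈ F, s = x ∨ G.Adj s x := by
  by_contra h
  obtain ⟨l, hl⟩ := hS
  obtain ⟨x, hx⟩ := hF.1
  refine Set.disjoint_left.1 (hF.disjoint_powerIter ?_ l) (hl ▸ Set.mem_univ x) hx
  refine Set.disjoint_left.2 fun y hy hyF => ?_
  obtain ⟨s, hs, hsy⟩ := mem_closedNbhd_iff.1 hy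
  exact h ⟨s, hs, y, hyF, hsy⟩

lemma exists_isMinPDS : ∃ S, IsMinPDS k G S := by
  obtain ⟨S, hS, hpds⟩ := Nat.sInf_mem
    (⟨_, Set.univ, rfl, 0, rfl⟩ : {n | ∃ S : Set V, S.ncard = n ∧ IsPDS k G S}.Nonempty)
  exact ⟨S, hpds, hS⟩

lemma IsMinPDS.ncard_le (hS : IsMinPDS k G S) {T : Set V} (hT : IsPDS k G T) :
    S.ncard ≤ T.ncard :=
  hS.2 ▸ Nat.sInf_le ⟨T, rfl, hT⟩

lemma isMinPDS_of_forall_ncard_le (hS : IsPDS k G S)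
    (h : ∀ T, IsPDS k G T → S.ncard ≤ T.ncard) : IsMinPDS k G S :=
  ⟨hS, le_antisymm (le_csInf ⟨_, S, rfl, hS⟩ (by rintro _ ⟨T, rfl, hT⟩; exact h T hT))
    (Nat.sInf_le ⟨S, rfl, hS⟩)⟩

lemma ppt_le (hS : IsMinPDS k G S) {l : ℕ} (hl : powerIter k G S l = Set.univ) :
    ppt k G ≤ l :=
  calc ppt k G ≤ pptOf k G S := Nat.sInf_le ⟨S, hS, rfl⟩
    _ ≤ l := Nat.sInf_le hl

lemma le_ppt {m : ℕ} (h : ∀ S, IsMinPDS k G S → ∀ l, powerIter k G S l = Set.univ → m ≤ l) :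
    m ≤ ppt k G := by
  obtain ⟨S, hS⟩ := exists_isMinPDS (k := k) (G := G)
  refine le_csInf ⟨_, S, hS, rfl⟩ ?_
  rintro _ ⟨T, hT, rfl⟩
  exact le_csInf hT.1 (h T hT)

end Propagation

section Subdivide

variable {W : Type*} {G : SimpleGraph W} {u v : W}

@[simp] lemma subdivide_adj_inl_inl {x y : W} :
    (subdivide G u v).Adj (.inl x) (.inl y) ↔
      G.Adj x y ∧ ¬((x = u ∧ y = v) ∨ (x = v ∧ y = u)) := by
  simp only [subdivide, fromRel_adj, ne_eq, Sum.inl.injEq, reduceCtorEq, and_false, or_false,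
    exists_and_left, exists_eq_left', G.adj_comm y x]
  exact ⟨fun ⟨_, h⟩ => by tauto, fun h => ⟨h.1.ne, Or.inl h⟩⟩

@[simp] lemma subdivide_adj_inl_inr {x : W} {z : Unit} :
    (subdivide G u v).Adj (.inl x) (.inr z) ↔ x = u ∨ x = v := by
  simp [subdivide]

@[simp] lemma subdivide_adj_inr_inl {x : W} {z : Unit} :
    (subdivide G u v).Adj (.inr z) (.inl x) ↔ x = u ∨ x = v := by
  rw [adj_comm, subdivide_adj_inl_inr]

lemma IsFort.image_inl_subdivide {F : Set W} (hF : IsFort G F) (hu : u ∉ F) (hv : v ∉ F) :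
    IsFort (subdivide G u v) (Sum.inl '' F) := by
  refine ⟨hF.1.image _, ?_⟩
  rintro (x | ⟨⟩) hx _ ⟨w, hw, rfl⟩ hxw
  · obtain ⟨hxw, hne⟩ := subdivide_adj_inl_inl.1 hxw
    obtain ⟨w', hw', hw'w, hxw'⟩ := hF.2 x (fun h => hx ⟨x, h, rfl⟩) w hw hxw
    refine ⟨.inl w', ⟨w', hw', rfl⟩, by simpa using hw'w, subdivide_adj_inl_inl.2 ⟨hxw', ?_⟩⟩
    rintro (⟨rfl, rfl⟩ | ⟨rfl, rfl⟩)
    exacts [hv hw', hu hw']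
  · obtain rfl | rfl := subdivide_adj_inr_inl.1 hxw
    exacts [absurd hw hu, absurd hw hv]

end Subdivide

/-- Vertex `2` carries the leaves `0, 1` and lies on the triangle `2, 3, 4`; the vertices `3`
and `4` are both adjacent to `5`, the first vertex of the path `5, 6, …, 2t + 5`. -/
def exampleRel (i j : ℕ) : Prop :=
  (i = 2 ∧ (j ≤ 1 ∨ j = 3 ∨ j = 4)) ∨ (i = 3 ∧ j = 4) ∨ ((i = 3 ∨ i = 4) ∧ j = 5) ∨
    (5 ≤ i ∧ j = i + 1)

def exampleGraph (t : ℕ) : SimpleGraph (Fin (2 * t + 6)) :=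
  SimpleGraph.fromRel fun a b => exampleRel a b

def exampleSubdivision (t : ℕ) : SimpleGraph (Fin (2 * t + 6) ⊕ Unit) :=
  subdivide (exampleGraph t) ⟨3, by omega⟩ ⟨4, by omega⟩

variable {t : ℕ}

lemma exampleGraph_adj {a b : Fin (2 * t + 6)} :
    (exampleGraph t).Adj a b ↔ a.val ≠ b.val ∧ (exampleRel a b ∨ exampleRel b a) := by
  simp [exampleGraph, Fin.val_ne_iff]

lemma isFort_exampleGraph_leaves : IsFort (exampleGraph t) {a | a.val ≤ 1} := by
  refine ⟨⟨⟨0, by omega⟩, Nat.zero_le 1⟩, fun v hv w hw hvw => ?_⟩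
  have hv : ¬ v.val ≤ 1 := hv
  have hw : w.val ≤ 1 := hw
  refine ⟨⟨1 - w.val, by omega⟩, show 1 - w.val ≤ 1 by omega, by simp [Fin.ext_iff]; omega, ?_⟩
  simp only [exampleGraph_adj, exampleRel] at hvw ⊢
  omega

lemma IsPDS.exists_le_two_exampleGraph {S : Set (Fin (2 * t + 6))}
    (hS : IsPDS 1 (exampleGraph t) S) : ∃ b ∈ S, b.val ≤ 2 := by
  obtain ⟨s, hs, x, hx, hsx⟩ := hS.exists_mem_fort isFort_exampleGraph_leaves
  have hx : x.val ≤ 1 := hx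
  refine ⟨s, hs, ?_⟩
  simp only [exampleGraph_adj, exampleRel, Fin.ext_iff] at hsx
  omega

lemma powerIter_exampleGraph_eq_univ :
    powerIter 1 (exampleGraph t) {⟨2, by omega⟩} (2 * t + 2) = Set.univ := by
  refine Set.eq_univ_of_forall fun x =>
    setOf_le_subset_powerIter (fun a => a.val - 3) ?_ ?_ _ (by omega) (by simp; omega)
  · intro a ha
    refine mem_closedNbhd_iff.2 ⟨_, rfl, ?_⟩
    simp only [exampleGraph_adj, exampleRel, Fin.ext_iff, true_and] at ha ⊢
    omega
  · intro a ha
    obtain ⟨p, hp⟩ : ∃ p : Fin (2 * t + 6),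
        (a.val = 5 ∧ p.val = 3) ∨ (6 ≤ a.val ∧ p.val + 1 = a.val) :=
      if h : a.val = 5 then ⟨⟨3, by omega⟩, Or.inl ⟨h, rfl⟩⟩
      else ⟨⟨a.val - 1, by omega⟩, Or.inr ⟨by omega, by simp; omega⟩⟩
    refine ⟨p, ?_, by omega, fun x hpx => ?_⟩
    all_goals simp only [exampleGraph_adj, exampleRel, Fin.ext_iff] at *; omega

lemma le_ppt_exampleGraph : 2 * t + 2 ≤ ppt 1 (exampleGraph t) := by
  refine le_ppt fun S hS l hl => ?_
  obtain ⟨b, hb, hb2⟩ := hS.1.exists_le_two_exampleGraph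
  have hSb : ∀ s ∈ S, s = b := fun s hs =>
    (Set.ncard_le_one_iff).1 ((hS.ncard_le ⟨_, powerIter_exampleGraph_eq_univ⟩).trans
      (Set.ncard_singleton _).le) hs hb
  -- distance from `{0, 1, 2}`
  let d : Fin (2 * t + 6) → ℕ := fun a =>
    if a.val ≤ 2 then 0 else if a.val ≤ 4 then 1 else a.val - 3
  have hd : ∀ a b, (exampleGraph t).Adj a b → d b ≤ d a + 1 := by
    intro a b hab
    simp only [exampleGraph_adj, exampleRel, d] at hab ⊢
    split_ifs <;> omega
  have hend := apply_le_add_of_mem_powerIter d 0 hd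
    (fun s hs => by simp [d, hSb s hs, hb2]) l ⟨2 * t + 5, by omega⟩ (hl ▸ Set.mem_univ _)
  simp only [d] at hend
  split_ifs at hend <;> omega

lemma IsPDS.exists_le_two_exampleSubdivision {S : Set (Fin (2 * t + 6) ⊕ Unit)}
    (hS : IsPDS 1 (exampleSubdivision t) S) : ∃ b, .inl b ∈ S ∧ b.val ≤ 2 := by
  obtain ⟨s, hs, _, ⟨x, hx, rfl⟩, hsx⟩ := hS.exists_mem_fort
    (isFort_exampleGraph_leaves.image_inl_subdivide (by simp) (by simp))
  have hx : x.val ≤ 1 := hx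
  rcases s with b | _
  · refine ⟨b, hs, ?_⟩
    simp only [exampleSubdivision, subdivide_adj_inl_inl, Sum.inl.injEq, exampleGraph_adj,
      exampleRel, Fin.ext_iff] at hsx
    omega
  · simp only [exampleSubdivision, subdivide_adj_inr_inl, reduceCtorEq, false_or,
      Fin.ext_iff] at hsx
    omega

lemma isFort_exampleSubdivision_tail :
    IsFort (exampleSubdivision t) {p | p.elim (fun a => 5 ≤ a.val) fun _ => True} := by
  refine ⟨⟨.inr (), trivial⟩, ?_⟩
  rintro (a | _) ha (b | _) hb hab
  · refine ⟨.inr (), trivial, Sum.inr_ne_inl, ?_⟩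
    simp only [Set.mem_ofPred_eq, Sum.elim_inl] at ha hb
    simp only [exampleSubdivision, subdivide_adj_inl_inl, subdivide_adj_inl_inr, exampleGraph_adj,
      exampleRel, Fin.ext_iff] at hab ⊢
    omega
  · refine ⟨.inl ⟨5, by omega⟩, show 5 ≤ 5 from le_rfl, Sum.inl_ne_inr, ?_⟩
    simp only [Set.mem_ofPred_eq, Sum.elim_inl] at ha
    simp only [exampleSubdivision, subdivide_adj_inl_inl, subdivide_adj_inl_inr, exampleGraph_adj,
      exampleRel, Fin.ext_iff, and_true] at hab ⊢
    omega
  all_goals exact absurd trivial ha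

lemma IsPDS.two_le_ncard_exampleSubdivision {T : Set (Fin (2 * t + 6) ⊕ Unit)}
    (hT : IsPDS 1 (exampleSubdivision t) T) : 2 ≤ T.ncard := by
  obtain ⟨b, hb, hb2⟩ := hT.exists_le_two_exampleSubdivision
  by_contra! hT1
  obtain ⟨s, hs, x, hx, hsx⟩ := hT.exists_mem_fort isFort_exampleSubdivision_tail
  obtain rfl := (Set.ncard_le_one_iff).1 (Nat.le_of_lt_succ hT1) hs hb
  rcases x with c | _
  · simp only [Set.mem_ofPred_eq, Sum.elim_inl] at hx
    simp only [exampleSubdivision, subdivide_adj_inl_inl, Sum.inl.injEq, exampleGraph_adj,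
      exampleRel, Fin.ext_iff] at hsx
    omega
  · simp only [exampleSubdivision, subdivide_adj_inl_inr, reduceCtorEq, false_or,
      Fin.ext_iff] at hsx
    omega

lemma powerIter_exampleSubdivision_eq_univ :
    powerIter 1 (exampleSubdivision t) {.inl ⟨2, by omega⟩, .inl ⟨t + 5, by omega⟩} (t + 2) =
      Set.univ := by
  -- distance from the sources, with the observed block `{0, …, 4}` collapsed to `0`
  let d : Fin (2 * t + 6) ⊕ Unit → ℕ :=
    Sum.elim (fun a => if a.val ≤ 4 then 0 else a.val - (t + 5) + (t + 5 - a.val)) fun _ => t + 2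
  refine Set.eq_univ_of_forall fun x => setOf_le_subset_powerIter d ?_ ?_ _ (by omega)
    (show d x ≤ t + 2 from ?_)
  · rintro (a | _) ha
    · simp only [d, Sum.elim_inl] at ha
      rw [mem_closedNbhd_iff]
      by_cases h4 : a.val ≤ 4
      · refine ⟨_, Set.mem_insert _ _, ?_⟩
        simp only [exampleSubdivision, Sum.inl.injEq, subdivide_adj_inl_inl, exampleGraph_adj,
          exampleRel, Fin.ext_iff, true_and]
        omega
      · refine ⟨_, Set.mem_insert_of_mem _ rfl, ?_⟩
        simp only [exampleSubdivision, Sum.inl.injEq, subdivide_adj_inl_inl, exampleGraph_adj,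
          exampleRel, Fin.ext_iff]
        split_ifs at ha
        omega
    · exact absurd ha (by simp [d])
  · rintro (a | _) ha
    · simp only [d, Sum.elim_inl] at ha ⊢
      split_ifs at ha with h4
      · omega
      obtain ⟨p, hp⟩ : ∃ p : Fin (2 * t + 6),
          (a.val < t + 5 ∧ p.val = a.val + 1) ∨ (t + 5 < a.val ∧ p.val + 1 = a.val) :=
        if h : a.val < t + 5 then ⟨⟨a.val + 1, by omega⟩, Or.inl ⟨h, rfl⟩⟩
        else ⟨⟨a.val - 1, by omega⟩, Or.inr ⟨by omega, by simp; omega⟩⟩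
      refine ⟨.inl p, ?_, ?_, fun x hpx => ?_⟩
      · simp only [exampleSubdivision, subdivide_adj_inl_inl, exampleGraph_adj, exampleRel,
          Fin.ext_iff]
        omega
      · simp only [Sum.elim_inl]
        split_ifs <;> omega
      · rcases x with c | _
        · simp only [exampleSubdivision, subdivide_adj_inl_inl, exampleGraph_adj, exampleRel,
            Fin.ext_iff] at hpx
          simp only [Sum.elim_inl, Sum.inl.injEq, Fin.ext_iff]
          split_ifs <;> omega
        · simp only [exampleSubdivision, subdivide_adj_inl_inr, Fin.ext_iff] at hpx
          omega
    · refine ⟨.inl ⟨3, by omega⟩, by simp [exampleSubdivision], by simp [d], fun x hx => ?_⟩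
      rcases x with c | _
      · simp only [exampleSubdivision, subdivide_adj_inl_inl, exampleGraph_adj, exampleRel,
          Fin.ext_iff] at hx
        simp only [d, Sum.elim_inl, Sum.elim_inr]
        split_ifs <;> omega
      · exact Or.inr rfl
  · rcases x with a | _
    · simp only [d, Sum.elim_inl]
      split_ifs <;> omega
    · simp [d]

lemma ppt_exampleSubdivision_le : ppt 1 (exampleSubdivision t) ≤ t + 2 := by
  refine ppt_le (isMinPDS_of_forall_ncard_le ⟨_, powerIter_exampleSubdivision_eq_univ⟩
    fun T hT => ?_) powerIter_exampleSubdivision_eq_univ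
  rw [Set.ncard_pair (by simp [Fin.ext_iff])]
  exact hT.two_le_ncard_exampleSubdivision

end PowerProp

open PowerProp in
/-- Subdividing an edge can decrease the power propagation time by any amount. -/
theorem exists_subdivide_ppt_decrease (t : ℕ) :
    ∃ (n : ℕ) (G : SimpleGraph (Fin n)) (u v : Fin n), G.Adj u v ∧
      (ppt 1 (subdivide G u v) : ℤ) ≤ (ppt 1 G : ℤ) - t := by
  refine ⟨2 * t + 6, exampleGraph t, ⟨3, by omega⟩, ⟨4, by omega⟩,
    by simp [exampleGraph_adj, exampleRel], ?_⟩
  have hG : 2 * t + 2 ≤ ppt 1 (exampleGraph t) := le_ppt_exampleGraph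
  have hH : ppt 1 (exampleSubdivision t) ≤ t + 2 := ppt_exampleSubdivision_le
  rw [exampleSubdivision] at hH
  omega
end

section
/- For every integer t ≥ 0 there exist a finite simple graph H and an edge e of H such that ppt(H/e) ≥ ppt(H) + t, where H/e is the graph obtained from H by contracting the edge e. -/
open SimpleGraph

namespace PowerProp

variable {W : Type*}

/-- The graph obtained from `G` by contracting the edge `uv`: the vertices `u`
and `v` are identified into the single vertex `u` (living in the subtype of
vertices different from `v`), whose neighbors are `(N(u) ∪ N(v)) \ {u,v}`. -/
def contractEdge (G : SimpleGraph W) (u v : W) : SimpleGraph {x : W // x ≠ v} :=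
  SimpleGraph.fromRel (fun a b =>
    G.Adj a.val b.val ∨ (a.val = u ∧ G.Adj v b.val))

end PowerProp
namespace PowerProp

variable {V : Type*}

lemma subset_closedNbhd (G : SimpleGraph V) (S : Set V) : S ⊆ closedNbhd G S :=
  Set.subset_union_left

lemma subset_propStep (k : ℕ) (G : SimpleGraph V) (X : Set V) : X ⊆ propStep k G X :=
  Set.subset_union_left

lemma powerIter_succ_succ (k : ℕ) (G : SimpleGraph V) (S : Set V) (j : ℕ) :
    powerIter k G S (j+2) = propStep k G (powerIter k G S (j+1)) := rfl

lemma powerIter_one (k : ℕ) (G : SimpleGraph V) (S : Set V) :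
    powerIter k G S 1 = closedNbhd G S := rfl

lemma powerIter_empty (k : ℕ) (G : SimpleGraph V) : ∀ l, powerIter k G (∅ : Set V) l = ∅
  | 0 => rfl
  | 1 => by simp [powerIter_one, closedNbhd]
  | (j+2) => by
      rw [powerIter_succ_succ, powerIter_empty k G (j+1)]
      simp [propStep]

lemma forcing (G : SimpleGraph V) (S : Set V) (j : ℕ) (E E' : Set V)
    (hE : E ⊆ powerIter 1 G S (j+1))
    (h : ∀ w ∈ E', w ∈ E ∨ ∃ v ∈ E, G.Adj v w ∧ ∀ y, G.Adj v y → y ∉ E → y = w) :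
    E' ⊆ powerIter 1 G S (j+2) := by
  intro w hw
  rw [powerIter_succ_succ]
  rcases h w hw with hwE | ⟨v, hvE, hadj, hsub⟩
  · exact subset_propStep _ _ _ (hE hwE)
  · by_cases hwP : w ∈ powerIter 1 G S (j+1)
    · exact subset_propStep _ _ _ hwP
    · refine Set.mem_union_right _ ⟨v, hE hvE, ⟨hadj, hwP⟩, ?_⟩
      have hsub2 : G.neighborSet v \ powerIter 1 G S (j+1) ⊆ {w} := by
        rintro y ⟨hy1, hy2⟩
        exact hsub y hy1 (fun hyE => hy2 (hE hyE))
      calc (G.neighborSet v \ powerIter 1 G S (j+1)).ncard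
          ≤ ({w} : Set V).ncard := Set.ncard_le_ncard hsub2 (Set.finite_singleton w)
        _ = 1 := Set.ncard_singleton w

lemma fort [Finite V] (G : SimpleGraph V) (S F : Set V)
    (hfort : ∀ v w, w ∈ F → v ∉ F → G.Adj v w → ∃ w', w' ∈ F ∧ w' ≠ w ∧ G.Adj v w')
    (h1 : ∀ x ∈ closedNbhd G S, x ∉ F) :
    ∀ l, ∀ x ∈ powerIter 1 G S l, x ∉ F
  | 0 => fun x hx => h1 x (subset_closedNbhd G S hx)
  | 1 => h1
  | (j+2) => by
      intro x hx hxF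
      have ih := fort G S F hfort h1 (j+1)
      rw [powerIter_succ_succ] at hx
      rcases hx with hx | ⟨v, hv, ⟨hxN, hxP⟩, hcard⟩
      · exact ih x hx hxF
      · have hvF : v ∉ F := ih v hv
        obtain ⟨w', hw'F, hne, hadj⟩ := hfort v x hxF hvF hxN
        have hw'P : w' ∉ powerIter 1 G S (j+1) := fun h => ih w' h hw'F
        have hlt : 1 < (G.neighborSet v \ powerIter 1 G S (j+1)).ncard := by
          rw [Set.one_lt_ncard (Set.toFinite _)]
          exact ⟨x, ⟨hxN, hxP⟩, w', ⟨hadj, hw'P⟩, fun h => hne h.symm⟩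
        omega

lemma lipschitz (G : SimpleGraph V) (S : Set V) (g : V → ℕ)
    (hg : ∀ x y, G.Adj x y → g x ≤ g y + 1) :
    ∀ l, ∀ v ∈ powerIter 1 G S l, ∃ s ∈ S, g s ≤ g v + l
  | 0 => fun v hv => ⟨v, hv, le_refl _⟩
  | 1 => by
      intro v hv
      rcases hv with hv | hv
      · exact ⟨v, hv, by omega⟩
      · simp only [Set.mem_iUnion, SimpleGraph.mem_neighborSet] at hv
        obtain ⟨s, hs, hadj⟩ := hv
        exact ⟨s, hs, hg s v hadj⟩
  | (j+2) => by
      intro v hv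
      rw [powerIter_succ_succ] at hv
      rcases hv with hv | ⟨v', hv', ⟨hadj, _⟩, _⟩
      · obtain ⟨s, hs, h⟩ := lipschitz G S g hg (j+1) v hv
        exact ⟨s, hs, by omega⟩
      · obtain ⟨s, hs, h⟩ := lipschitz G S g hg (j+1) v' hv'
        have := hg v' v hadj
        exact ⟨s, hs, by omega⟩

end PowerProp
namespace PowerProp

/-- Linear arithmetic description of the edges of our graph `HH t`:
path `0,…,3t+4`; pendant pair `3t+5, 3t+6` at `t+2`;
triangle `3t+4, 3t+7, 3t+8`. -/
def Rel (t a b : ℕ) : Prop :=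
  (b = a + 1 ∧ b ≤ 3*t+4) ∨ (a = t+2 ∧ (b = 3*t+5 ∨ b = 3*t+6)) ∨
  (a = 3*t+4 ∧ (b = 3*t+7 ∨ b = 3*t+8)) ∨ (a = 3*t+7 ∧ b = 3*t+8)

def HH (t : ℕ) : SimpleGraph (Fin (3*t+9)) :=
  SimpleGraph.fromRel (fun i j => Rel t i.1 j.1)

lemma HH_adj {t : ℕ} {x y : Fin (3*t+9)} :
    (HH t).Adj x y ↔ x.1 ≠ y.1 ∧ (Rel t x.1 y.1 ∨ Rel t y.1 x.1) := by
  simp [HH, SimpleGraph.fromRel_adj, Fin.ext_iff, Ne]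

end PowerProp
namespace PowerProp

def pm (t : ℕ) : Fin (3*t+9) := ⟨t+2, by omega⟩
def pN (t : ℕ) : Fin (3*t+9) := ⟨3*t+4, by omega⟩
def cv (t : ℕ) : Fin (3*t+9) := ⟨3*t+7, by omega⟩
def dv (t : ℕ) : Fin (3*t+9) := ⟨3*t+8, by omega⟩

@[simp] lemma pm_val (t : ℕ) : (pm t).1 = t+2 := rfl
@[simp] lemma pN_val (t : ℕ) : (pN t).1 = 3*t+4 := rfl
@[simp] lemma cv_val (t : ℕ) : (cv t).1 = 3*t+7 := rfl
@[simp] lemma dv_val (t : ℕ) : (dv t).1 = 3*t+8 := rfl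

def S0 (t : ℕ) : Set (Fin (3*t+9)) := {pm t, pN t}

def Esim (t l : ℕ) : Set (Fin (3*t+9)) :=
  {x | 3*t+5 ≤ x.1 ∨ (x.1 ≤ 3*t+4 ∧ t+2 ≤ x.1 + l ∧ x.1 ≤ t+2+l) ∨
      (x.1 ≤ 3*t+4 ∧ 3*t+4 ≤ x.1 + l)}

lemma mem_Esim {t l : ℕ} {x : Fin (3*t+9)} :
    x ∈ Esim t l ↔ (3*t+5 ≤ x.1 ∨ (x.1 ≤ 3*t+4 ∧ t+2 ≤ x.1 + l ∧ x.1 ≤ t+2+l) ∨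
      (x.1 ≤ 3*t+4 ∧ 3*t+4 ≤ x.1 + l)) := Iff.rfl

lemma hh_sim (t : ℕ) : ∀ j, Esim t (j+1) ⊆ powerIter 1 (HH t) (S0 t) (j+1) := by
  intro j
  induction j with
  | zero =>
    intro x hx
    rw [mem_Esim] at hx
    have hxlt := x.isLt
    rw [powerIter_one]
    have hcase : x.1 = t+1 ∨ x.1 = t+2 ∨ x.1 = t+3 ∨ x.1 = 3*t+3 ∨ x.1 = 3*t+4 ∨
        x.1 = 3*t+5 ∨ x.1 = 3*t+6 ∨ x.1 = 3*t+7 ∨ x.1 = 3*t+8 := by omega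
    have hpm : pm t ∈ S0 t := Set.mem_insert _ _
    have hpN : pN t ∈ S0 t := Set.mem_insert_of_mem _ rfl
    rcases hcase with h|h|h|h|h|h|h|h|h
    · exact Set.mem_union_right _ (Set.mem_biUnion hpm
        (by rw [SimpleGraph.mem_neighborSet, HH_adj]; simp only [pm_val]
            exact ⟨by omega, by unfold Rel; omega⟩))
    · exact Set.mem_union_left _ (by left; exact Fin.val_injective (by simp [h]))
    · exact Set.mem_union_right _ (Set.mem_biUnion hpm
        (by rw [SimpleGraph.mem_neighborSet, HH_adj]; simp only [pm_val]
            exact ⟨by omega, by unfold Rel; omega⟩))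
    · exact Set.mem_union_right _ (Set.mem_biUnion hpN
        (by rw [SimpleGraph.mem_neighborSet, HH_adj]; simp only [pN_val]
            exact ⟨by omega, by unfold Rel; omega⟩))
    · exact Set.mem_union_left _ (by right; exact Fin.val_injective (by simp [h]))
    · exact Set.mem_union_right _ (Set.mem_biUnion hpm
        (by rw [SimpleGraph.mem_neighborSet, HH_adj]; simp only [pm_val]
            exact ⟨by omega, by unfold Rel; omega⟩))
    · exact Set.mem_union_right _ (Set.mem_biUnion hpm
        (by rw [SimpleGraph.mem_neighborSet, HH_adj]; simp only [pm_val]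
            exact ⟨by omega, by unfold Rel; omega⟩))
    · exact Set.mem_union_right _ (Set.mem_biUnion hpN
        (by rw [SimpleGraph.mem_neighborSet, HH_adj]; simp only [pN_val]
            exact ⟨by omega, by unfold Rel; omega⟩))
    · exact Set.mem_union_right _ (Set.mem_biUnion hpN
        (by rw [SimpleGraph.mem_neighborSet, HH_adj]; simp only [pN_val]
            exact ⟨by omega, by unfold Rel; omega⟩))
  | succ j ih =>
    show Esim t (j+2) ⊆ powerIter 1 (HH t) (S0 t) (j+2)
    apply forcing (HH t) (S0 t) j (Esim t (j+1)) (Esim t (j+2)) ih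
    intro w hw
    by_cases hwE : w ∈ Esim t (j+1)
    · exact Or.inl hwE
    · right
      rw [mem_Esim] at hw hwE
      have hwlt := w.isLt
      have hcase : (w.1 + (j+2) = t+2) ∨ (w.1 = t+2+(j+2) ∧ w.1 ≤ 3*t+4) ∨
          (w.1 + (j+2) = 3*t+4) := by omega
      rcases hcase with h | ⟨h, hle⟩ | h
      · -- w = p_{m-(j+2)}, forced by v = p_{w+1}
        refine ⟨⟨w.1+1, by omega⟩, ?_, ?_, ?_⟩
        · rw [mem_Esim]; simp only [Fin.val_mk]; omega
        · rw [HH_adj]; simp only [Fin.val_mk]; unfold Rel; omega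
        · intro y hy hyE
          rw [HH_adj] at hy
          rw [mem_Esim] at hyE
          unfold Rel at hy
          simp only [Fin.val_mk] at hy
          have hylt := y.isLt
          exact Fin.val_injective (by omega)
      · -- w = p_{m+(j+2)}, forced by v = p_{w-1}
        refine ⟨⟨t+3+j, by omega⟩, ?_, ?_, ?_⟩
        · rw [mem_Esim]; simp only [Fin.val_mk]; omega
        · rw [HH_adj]; simp only [Fin.val_mk]; unfold Rel; omega
        · intro y hy hyE
          rw [HH_adj] at hy
          rw [mem_Esim] at hyE
          unfold Rel at hy
          simp only [Fin.val_mk] at hy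
          have hylt := y.isLt
          exact Fin.val_injective (by omega)
      · -- w = p_{N-(j+2)}, forced by v = p_{w+1}
        refine ⟨⟨w.1+1, by omega⟩, ?_, ?_, ?_⟩
        · rw [mem_Esim]; simp only [Fin.val_mk]; omega
        · rw [HH_adj]; simp only [Fin.val_mk]; unfold Rel; omega
        · intro y hy hyE
          rw [HH_adj] at hy
          rw [mem_Esim] at hyE
          unfold Rel at hy
          simp only [Fin.val_mk] at hy
          have hylt := y.isLt
          exact Fin.val_injective (by omega)

lemma hh_iter_univ (t : ℕ) : powerIter 1 (HH t) (S0 t) (t+2) = Set.univ := by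
  apply Set.eq_univ_of_univ_subset
  intro x _
  apply hh_sim t (t+1)
  rw [mem_Esim]
  have := x.isLt
  omega

end PowerProp
namespace PowerProp

def F1 (t : ℕ) : Set (Fin (3*t+9)) := {x | x.1 = 3*t+5 ∨ x.1 = 3*t+6}
def F2 (t : ℕ) : Set (Fin (3*t+9)) := {x | x.1 = 3*t+7 ∨ x.1 = 3*t+8}

lemma fort_F1 (t : ℕ) : ∀ v w, w ∈ F1 t → v ∉ F1 t → (HH t).Adj v w →
    ∃ w', w' ∈ F1 t ∧ w' ≠ w ∧ (HH t).Adj v w' := by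
  intro v w hwF hvF hadj
  rw [HH_adj] at hadj
  unfold Rel at hadj
  simp only [F1, Set.mem_setOf_eq] at hwF hvF
  have hv : v.1 = t+2 := by omega
  rcases hwF with hw | hw
  · refine ⟨⟨3*t+6, by omega⟩, Or.inr rfl, ?_, ?_⟩
    · intro h; rw [Fin.ext_iff] at h; simp only [Fin.val_mk] at h; omega
    · rw [HH_adj]; simp only [Fin.val_mk]; unfold Rel; omega
  · refine ⟨⟨3*t+5, by omega⟩, Or.inl rfl, ?_, ?_⟩
    · intro h; rw [Fin.ext_iff] at h; simp only [Fin.val_mk] at h; omega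
    · rw [HH_adj]; simp only [Fin.val_mk]; unfold Rel; omega

lemma fort_F2 (t : ℕ) : ∀ v w, w ∈ F2 t → v ∉ F2 t → (HH t).Adj v w →
    ∃ w', w' ∈ F2 t ∧ w' ≠ w ∧ (HH t).Adj v w' := by
  intro v w hwF hvF hadj
  rw [HH_adj] at hadj
  unfold Rel at hadj
  simp only [F2, Set.mem_setOf_eq] at hwF hvF
  have hv : v.1 = 3*t+4 := by omega
  rcases hwF with hw | hw
  · refine ⟨⟨3*t+8, by omega⟩, Or.inr rfl, ?_, ?_⟩
    · intro h; rw [Fin.ext_iff] at h; simp only [Fin.val_mk] at h; omega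
    · rw [HH_adj]; simp only [Fin.val_mk]; unfold Rel; omega
  · refine ⟨⟨3*t+7, by omega⟩, Or.inl rfl, ?_, ?_⟩
    · intro h; rw [Fin.ext_iff] at h; simp only [Fin.val_mk] at h; omega
    · rw [HH_adj]; simp only [Fin.val_mk]; unfold Rel; omega

lemma mem_closedNbhd_singleton {G : SimpleGraph V} {s x : V} :
    x ∈ closedNbhd G {s} ↔ x = s ∨ G.Adj s x := by
  simp [closedNbhd]

lemma hh_not_pds_singleton (t : ℕ) (s : Fin (3*t+9)) : ¬ IsPDS 1 (HH t) {s} := by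
  intro ⟨l, hl⟩
  have key : (∀ x ∈ closedNbhd (HH t) {s}, x ∉ F1 t) ∨
      (∀ x ∈ closedNbhd (HH t) {s}, x ∉ F2 t) := by
    by_contra hc
    push_neg at hc
    obtain ⟨⟨x1, hx1, hx1F⟩, ⟨x2, hx2, hx2F⟩⟩ := hc
    rw [mem_closedNbhd_singleton] at hx1 hx2
    simp only [F1, F2, Set.mem_setOf_eq] at hx1F hx2F
    have h1 : s.1 = t+2 ∨ s.1 = 3*t+5 ∨ s.1 = 3*t+6 := by
      rcases hx1 with h | h
      · subst h; omega
      · rw [HH_adj] at h; unfold Rel at h; omega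
    have h2 : s.1 = 3*t+4 ∨ s.1 = 3*t+7 ∨ s.1 = 3*t+8 := by
      rcases hx2 with h | h
      · subst h; omega
      · rw [HH_adj] at h; unfold Rel at h; omega
    omega
  rcases key with hkey | hkey
  · have := fort (HH t) {s} (F1 t) (fort_F1 t) hkey l ⟨3*t+5, by omega⟩
      (by rw [hl]; trivial)
    exact this (Or.inl rfl)
  · have := fort (HH t) {s} (F2 t) (fort_F2 t) hkey l ⟨3*t+7, by omega⟩
      (by rw [hl]; trivial)
    exact this (Or.inl rfl)

lemma pds_S0 (t : ℕ) : IsPDS 1 (HH t) (S0 t) := ⟨t+2, hh_iter_univ t⟩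

lemma ncard_S0 (t : ℕ) : (S0 t).ncard = 2 := by
  apply Set.ncard_pair
  intro h; rw [Fin.ext_iff] at h; simp only [pm_val, pN_val] at h; omega

lemma hh_not_pds_small (t : ℕ) (S : Set (Fin (3*t+9))) (h : S.ncard ≤ 1) :
    ¬ IsPDS 1 (HH t) S := by
  intro hpds
  rcases Nat.le_one_iff_eq_zero_or_eq_one.mp h with h0 | h1
  · rw [Set.ncard_eq_zero (Set.toFinite S)] at h0
    subst h0
    obtain ⟨l, hl⟩ := hpds
    rw [powerIter_empty] at hl
    have : (⟨0, by omega⟩ : Fin (3*t+9)) ∈ (Set.univ : Set (Fin (3*t+9))) := trivial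
    rw [← hl] at this
    exact this
  · obtain ⟨s, rfl⟩ := Set.ncard_eq_one.mp h1
    exact hh_not_pds_singleton t s hpds

lemma pdNum_HH (t : ℕ) : pdNum 1 (HH t) = 2 := by
  have hmem : 2 ∈ {n | ∃ S : Set (Fin (3*t+9)), S.ncard = n ∧ IsPDS 1 (HH t) S} :=
    ⟨S0 t, ncard_S0 t, pds_S0 t⟩
  have hlow : ∀ n' ∈ {n | ∃ S : Set (Fin (3*t+9)), S.ncard = n ∧ IsPDS 1 (HH t) S}, 2 ≤ n' := by
    rintro n' ⟨S, hcard, hpds⟩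
    by_contra hn
    exact hh_not_pds_small t S (by omega) hpds
  exact le_antisymm (Nat.sInf_le hmem) (hlow _ (Nat.sInf_mem ⟨2, hmem⟩))

lemma ppt_HH_le (t : ℕ) : ppt 1 (HH t) ≤ t+2 := by
  have h1 : pptOf 1 (HH t) (S0 t) ≤ t+2 := Nat.sInf_le (hh_iter_univ t)
  have h2 : ppt 1 (HH t) ≤ pptOf 1 (HH t) (S0 t) :=
    Nat.sInf_le ⟨S0 t, ⟨pds_S0 t, by rw [ncard_S0, pdNum_HH]⟩, rfl⟩
  omega

end PowerProp
namespace PowerProp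

def GG (t : ℕ) : SimpleGraph {x : Fin (3*t+9) // x ≠ dv t} :=
  contractEdge (HH t) (cv t) (dv t)

lemma ne_dv_val {t : ℕ} (x : {z : Fin (3*t+9) // z ≠ dv t}) : x.1.1 ≠ 3*t+8 := by
  intro h
  exact x.2 (Fin.val_injective (by simp [h]))

lemma GG_adj {t : ℕ} {x y : {z : Fin (3*t+9) // z ≠ dv t}} :
    (GG t).Adj x y ↔ x.1.1 ≠ y.1.1 ∧ (Rel t x.1.1 y.1.1 ∨ Rel t y.1.1 x.1.1) := by
  have hx8 := ne_dv_val x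
  have hy8 := ne_dv_val y
  have hxlt := x.1.isLt
  have hylt := y.1.isLt
  have hsub : (x = y) ↔ (x.1.1 = y.1.1) := by
    rw [Subtype.ext_iff, Fin.ext_iff]
  show (SimpleGraph.fromRel _).Adj x y ↔ _
  rw [SimpleGraph.fromRel_adj]
  constructor
  · rintro ⟨hne, h⟩
    have hne' : x.1.1 ≠ y.1.1 := fun hh => hne (hsub.mpr hh)
    refine ⟨hne', ?_⟩
    rcases h with (h | ⟨hxc, hd⟩) | (h | ⟨hyc, hd⟩)
    · exact (HH_adj.mp h).2
    · rw [HH_adj] at hd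
      have hxc' : x.1.1 = 3*t+7 := by rw [hxc]; rfl
      unfold Rel at hd ⊢
      simp only [dv_val] at hd
      omega
    · have := (HH_adj.mp h).2
      tauto
    · rw [HH_adj] at hd
      have hyc' : y.1.1 = 3*t+7 := by rw [hyc]; rfl
      unfold Rel at hd ⊢
      simp only [dv_val] at hd
      omega
  · rintro ⟨hne, h⟩
    exact ⟨fun hh => hne (hsub.mp hh), Or.inl (Or.inl (HH_adj.mpr ⟨hne, h⟩))⟩


def qm (t : ℕ) : {z : Fin (3*t+9) // z ≠ dv t} :=
  ⟨pm t, by intro h; rw [Fin.ext_iff] at h; simp only [pm_val, dv_val] at h; omega⟩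

@[simp] lemma qm_val (t : ℕ) : (qm t).1.1 = t+2 := rfl

def cvert (t : ℕ) : {z : Fin (3*t+9) // z ≠ dv t} :=
  ⟨cv t, by intro h; rw [Fin.ext_iff] at h; simp only [cv_val, dv_val] at h; omega⟩

@[simp] lemma cvert_val (t : ℕ) : (cvert t).1.1 = 3*t+7 := rfl

def S1 (t : ℕ) : Set {z : Fin (3*t+9) // z ≠ dv t} := {qm t}

def Esim' (t l : ℕ) : Set {z : Fin (3*t+9) // z ≠ dv t} :=
  {x | (x.1.1 ≤ 3*t+4 ∧ t+2 ≤ x.1.1 + l ∧ x.1.1 ≤ t+2+l) ∨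
       (1 ≤ l ∧ (x.1.1 = 3*t+5 ∨ x.1.1 = 3*t+6)) ∨
       (x.1.1 = 3*t+7 ∧ 3*t+5 ≤ t+2+l)}

lemma mem_Esim' {t l : ℕ} {x : {z : Fin (3*t+9) // z ≠ dv t}} :
    x ∈ Esim' t l ↔ ((x.1.1 ≤ 3*t+4 ∧ t+2 ≤ x.1.1 + l ∧ x.1.1 ≤ t+2+l) ∨
       (1 ≤ l ∧ (x.1.1 = 3*t+5 ∨ x.1.1 = 3*t+6)) ∨
       (x.1.1 = 3*t+7 ∧ 3*t+5 ≤ t+2+l)) := Iff.rfl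

lemma gg_sim (t : ℕ) : ∀ j, Esim' t (j+1) ⊆ powerIter 1 (GG t) (S1 t) (j+1) := by
  intro j
  induction j with
  | zero =>
    intro x hx
    rw [mem_Esim'] at hx
    have hxlt := x.1.isLt
    have hx8 := ne_dv_val x
    rw [powerIter_one]
    unfold S1
    rw [mem_closedNbhd_singleton]
    have hcase : x.1.1 = t+1 ∨ x.1.1 = t+2 ∨ x.1.1 = t+3 ∨ x.1.1 = 3*t+5 ∨
        x.1.1 = 3*t+6 := by omega
    by_cases hq : x.1.1 = t+2
    · left
      exact Subtype.ext (Fin.val_injective (by simp [hq]))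
    · right
      rw [GG_adj]
      simp only [qm_val]
      unfold Rel
      omega
  | succ j ih =>
    show Esim' t (j+2) ⊆ powerIter 1 (GG t) (S1 t) (j+2)
    apply forcing (GG t) (S1 t) j (Esim' t (j+1)) (Esim' t (j+2)) ih
    intro w hw
    by_cases hwE : w ∈ Esim' t (j+1)
    · exact Or.inl hwE
    · right
      rw [mem_Esim'] at hw hwE
      have hwlt := w.1.isLt
      have hw8 := ne_dv_val w
      have hcase : (w.1.1 + (j+2) = t+2) ∨ (w.1.1 = t+2+(j+2) ∧ w.1.1 ≤ 3*t+4) ∨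
          (w.1.1 = 3*t+7 ∧ t+2+(j+2) = 3*t+5) := by omega
      rcases hcase with h | ⟨h, hle⟩ | ⟨h, hj⟩
      · refine ⟨⟨⟨w.1.1+1, by omega⟩, ?_⟩, ?_, ?_, ?_⟩
        · intro hh; rw [Fin.ext_iff] at hh; simp only [Fin.val_mk, dv_val] at hh; omega
        · rw [mem_Esim']; simp only [Fin.val_mk]; omega
        · rw [GG_adj]; simp only [Fin.val_mk]; unfold Rel; omega
        · intro y hy hyE
          rw [GG_adj] at hy
          rw [mem_Esim'] at hyE
          unfold Rel at hy
          simp only [Fin.val_mk] at hy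
          have hylt := y.1.isLt
          have hy8 := ne_dv_val y
          exact Subtype.ext (Fin.val_injective (by omega))
      · refine ⟨⟨⟨t+3+j, by omega⟩, ?_⟩, ?_, ?_, ?_⟩
        · intro hh; rw [Fin.ext_iff] at hh; simp only [Fin.val_mk, dv_val] at hh; omega
        · rw [mem_Esim']; simp only [Fin.val_mk]; omega
        · rw [GG_adj]; simp only [Fin.val_mk]; unfold Rel; omega
        · intro y hy hyE
          rw [GG_adj] at hy
          rw [mem_Esim'] at hyE
          unfold Rel at hy
          simp only [Fin.val_mk] at hy
          have hylt := y.1.isLt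
          have hy8 := ne_dv_val y
          exact Subtype.ext (Fin.val_injective (by omega))
      · refine ⟨⟨⟨3*t+4, by omega⟩, ?_⟩, ?_, ?_, ?_⟩
        · intro hh; rw [Fin.ext_iff] at hh; simp only [Fin.val_mk, dv_val] at hh; omega
        · rw [mem_Esim']; simp only [Fin.val_mk]; omega
        · rw [GG_adj]; simp only [Fin.val_mk]; unfold Rel; omega
        · intro y hy hyE
          rw [GG_adj] at hy
          rw [mem_Esim'] at hyE
          unfold Rel at hy
          simp only [Fin.val_mk] at hy
          have hylt := y.1.isLt
          have hy8 := ne_dv_val y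
          exact Subtype.ext (Fin.val_injective (by omega))

lemma gg_iter_univ (t : ℕ) : powerIter 1 (GG t) (S1 t) (2*t+3) = Set.univ := by
  apply Set.eq_univ_of_univ_subset
  intro x _
  apply gg_sim t (2*t+2)
  rw [mem_Esim']
  have := x.1.isLt
  have := ne_dv_val x
  omega

lemma pds_S1 (t : ℕ) : IsPDS 1 (GG t) (S1 t) := ⟨2*t+3, gg_iter_univ t⟩

lemma pdNum_GG (t : ℕ) : pdNum 1 (GG t) = 1 := by
  have hmem : 1 ∈ {n | ∃ S : Set {z : Fin (3*t+9) // z ≠ dv t},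
      S.ncard = n ∧ IsPDS 1 (GG t) S} := ⟨S1 t, Set.ncard_singleton _, pds_S1 t⟩
  have hlow : ∀ n' ∈ {n | ∃ S : Set {z : Fin (3*t+9) // z ≠ dv t},
      S.ncard = n ∧ IsPDS 1 (GG t) S}, 1 ≤ n' := by
    rintro n' ⟨S, hcard, hpds⟩
    by_contra hn
    have h0 : S.ncard = 0 := by omega
    rw [Set.ncard_eq_zero (Set.toFinite S)] at h0
    subst h0
    obtain ⟨l, hl⟩ := hpds
    rw [powerIter_empty] at hl
    have : qm t ∈ (Set.univ : Set {z : Fin (3*t+9) // z ≠ dv t}) := trivial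
    rw [← hl] at this
    exact this
  exact le_antisymm (Nat.sInf_le hmem) (hlow _ (Nat.sInf_mem ⟨1, hmem⟩))

def F1' (t : ℕ) : Set {z : Fin (3*t+9) // z ≠ dv t} := {x | x.1.1 = 3*t+5 ∨ x.1.1 = 3*t+6}

lemma fort_F1' (t : ℕ) : ∀ v w, w ∈ F1' t → v ∉ F1' t → (GG t).Adj v w →
    ∃ w', w' ∈ F1' t ∧ w' ≠ w ∧ (GG t).Adj v w' := by
  intro v w hwF hvF hadj
  rw [GG_adj] at hadj
  unfold Rel at hadj
  simp only [F1', Set.mem_setOf_eq] at hwF hvF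
  have hv : v.1.1 = t+2 := by omega
  rcases hwF with hw | hw
  · refine ⟨⟨⟨3*t+6, by omega⟩, ?_⟩, Or.inr rfl, ?_, ?_⟩
    · intro hh; rw [Fin.ext_iff] at hh; simp only [Fin.val_mk, dv_val] at hh; omega
    · intro hh; rw [Subtype.ext_iff, Fin.ext_iff] at hh; simp only [Fin.val_mk] at hh; omega
    · rw [GG_adj]; simp only [Fin.val_mk]; unfold Rel; omega
  · refine ⟨⟨⟨3*t+5, by omega⟩, ?_⟩, Or.inl rfl, ?_, ?_⟩
    · intro hh; rw [Fin.ext_iff] at hh; simp only [Fin.val_mk, dv_val] at hh; omega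
    · intro hh; rw [Subtype.ext_iff, Fin.ext_iff] at hh; simp only [Fin.val_mk] at hh; omega
    · rw [GG_adj]; simp only [Fin.val_mk]; unfold Rel; omega

lemma gg_singleton_loc (t : ℕ) (s : {z : Fin (3*t+9) // z ≠ dv t})
    (hpds : IsPDS 1 (GG t) {s}) : s.1.1 = t+2 ∨ s.1.1 = 3*t+5 ∨ s.1.1 = 3*t+6 := by
  by_contra hc
  push_neg at hc
  obtain ⟨l, hl⟩ := hpds
  have hkey : ∀ x ∈ closedNbhd (GG t) {s}, x ∉ F1' t := by
    intro x hx hxF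
    rw [mem_closedNbhd_singleton] at hx
    simp only [F1', Set.mem_setOf_eq] at hxF
    rcases hx with h | h
    · subst h; omega
    · rw [GG_adj] at h; unfold Rel at h; omega
  have := fort (GG t) {s} (F1' t) (fort_F1' t) hkey l
      ⟨⟨3*t+5, by omega⟩, by intro hh; rw [Fin.ext_iff] at hh
                             simp only [Fin.val_mk, dv_val] at hh; omega⟩
      (by rw [hl]; trivial)
  exact this (Or.inl rfl)

def gfun (t : ℕ) : {z : Fin (3*t+9) // z ≠ dv t} → ℕ := fun x =>
  if x.1.1 = 3*t+7 then 0 else if 3*t+5 ≤ x.1.1 then 2*t+3 else 3*t+5 - x.1.1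

lemma glip (t : ℕ) : ∀ x y, (GG t).Adj x y → gfun t x ≤ gfun t y + 1 := by
  intro x y hadj
  rw [GG_adj] at hadj
  unfold Rel at hadj
  have hx8 := ne_dv_val x
  have hy8 := ne_dv_val y
  unfold gfun
  split_ifs <;> omega

lemma pptOf_lower (t : ℕ) (s : {z : Fin (3*t+9) // z ≠ dv t})
    (hpds : IsPDS 1 (GG t) {s}) : 2*t+3 ≤ pptOf 1 (GG t) {s} := by
  have hloc := gg_singleton_loc t s hpds
  have hmem : pptOf 1 (GG t) {s} ∈ {l | powerIter 1 (GG t) {s} l = Set.univ} :=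
    Nat.sInf_mem hpds
  have hc : cvert t ∈ powerIter 1 (GG t) {s} (pptOf 1 (GG t) {s}) := by
    rw [hmem]; trivial
  obtain ⟨s', hs', hineq⟩ := lipschitz (GG t) {s} (gfun t) (glip t) _ _ hc
  rw [Set.mem_singleton_iff] at hs'
  subst hs'
  have h0 : gfun t (cvert t) = 0 := by simp [gfun]
  have hgs : gfun t s' = 2*t+3 := by
    unfold gfun
    split_ifs <;> omega
  omega

lemma ppt_GG_ge (t : ℕ) : 2*t+3 ≤ ppt 1 (GG t) := by
  have hne : {t' | ∃ S, IsMinPDS 1 (GG t) S ∧ pptOf 1 (GG t) S = t'}.Nonempty :=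
    ⟨pptOf 1 (GG t) (S1 t), S1 t, ⟨pds_S1 t, by rw [pdNum_GG]; exact Set.ncard_singleton _⟩, rfl⟩
  obtain ⟨T, ⟨hTpds, hTcard⟩, hTppt⟩ := Nat.sInf_mem hne
  rw [pdNum_GG] at hTcard
  obtain ⟨s, rfl⟩ := Set.ncard_eq_one.mp hTcard
  unfold ppt
  rw [← hTppt]
  exact pptOf_lower t s hTpds

end PowerProp
open PowerProp in
/-- Contracting an edge can increase the power propagation time by any amount. -/
theorem exists_contract_ppt_increase (t : ℕ) :
    ∃ (n : ℕ) (H : SimpleGraph (Fin n)) (u v : Fin n), H.Adj u v ∧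
      ppt 1 H + t ≤ ppt 1 (contractEdge H u v) := by
  refine ⟨3*t+9, HH t, cv t, dv t, ?_, ?_⟩
  · rw [HH_adj]
    simp only [cv_val, dv_val]
    unfold PowerProp.Rel
    omega
  · have h1 := ppt_HH_le t
    have h2 := ppt_GG_ge t
    unfold GG at h2
    omega
end
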